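/- Let G be a graph on the vertex set [n−1] with n ≥ 2, and let Ĝ be its suspension. Then N(P_{Ĝ}) ≥ 2^{n−1}, and equality holds if and only if G has no edges (so that Ĝ is the star graph K_{1,n−1}). -/

import Mathlib

open Finset

/-- The symmetric edge polytope of a finite simple graph `G`: the convex hull of the
vectors `e_i - e_j` for all adjacent pairs `i, j`. -/
def symEdgePolytope {V : Type*} [DecidableEq V] (G : SimpleGraph V) : Set (V → ℝ) :=
  convexHull ℝ {x : V → ℝ | ∃ i j : V, G.Adj i j ∧
    x = fun k => (if k = i then (1 : ℝ) else 0) - (if k = j then (1 : ℝ) else 0)}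

/-- A facet of a polytope `P`: a maximal proper (exposed) face of `P`. -/
def IsFacet {V : Type*} (P F : Set (V → ℝ)) : Prop :=
  IsExposed ℝ P F ∧ F ≠ P ∧
    ∀ F' : Set (V → ℝ), IsExposed ℝ P F' → F' ≠ P → F ⊆ F' → F' = F

/-- `N(P)`: the number of facets of a polytope `P`. -/
noncomputable def numFacets {V : Type*} (P : Set (V → ℝ)) : ℕ :=
  Set.ncard {F : Set (V → ℝ) | IsFacet P F}

/-- The suspension `Ĝ` of a graph `G`: a new apex vertex (`none`) is joined to all
vertices of `G`. -/
def suspension {V : Type*} (G : SimpleGraph V) : SimpleGraph (Option V) where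
  Adj x y :=
    match x, y with
    | some a, some b => G.Adj a b
    | some _, none => True
    | none, some _ => True
    | none, none => False
  symm := by
    constructor
    rintro (_ | a) (_ | b) h
    · exact h
    · trivial
    · trivial
    · exact h.symm
  loopless := by
    constructor
    rintro (_ | a) h
    · exact h
    · exact G.irrefl h

/-!
A labelling `c : V → {1, 0, -1}`, extended by `0` at the apex, that changes by at most `1` along
edges of `G` and gives every `0`-vertex a neighbour with nonzero label defines the facet
`P_Ĝ ∩ {⟨c, x⟩ = 1}`. It is maximal because `P_Ĝ` lies in the hyperplane `∑ x = 0`, spanned by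
the vectors `e_v - e_apex`, and a functional constant on the face takes values proportional to
`c` at these vectors. Each subset `S ⊆ V` gives such a labelling (`1` on
`S`, `0` on its other neighbours, `-1` elsewhere), hence `2^|V|` distinct facets. An edge at `u`
makes the labelling `0` at `u`, `-1` elsewhere admissible too, and it takes no value `1`, so it is
not of subset type. When `G` has no edges, a facet maximising `l` with value `M > 0` lies in the
subset facet of `S = {v | l (e_v - e_apex) = M}`, hence equals it.
-/

section Exposed

variable {𝕜 E : Type*} [TopologicalSpace 𝕜] [Ring 𝕜] [PartialOrder 𝕜] [AddCommMonoid E]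
  [TopologicalSpace E] [Module 𝕜 E] {A F : Set E}

theorem isExposed_setOf_apply_eq {l : StrongDual 𝕜 E} {M : 𝕜} (hle : ∀ y ∈ A, l y ≤ M) :
    IsExposed 𝕜 A {x ∈ A | l x = M} := by
  rintro ⟨x₀, hx₀A, hx₀⟩
  refine ⟨l, Set.ext fun x => and_congr_right fun hx => ⟨fun h y hy => h ▸ hle y hy, fun h => ?_⟩⟩
  exact (hle x hx).antisymm (hx₀ ▸ h x₀ hx₀A)

theorem IsExposed.exists_eq_setOf_apply_eq (hF : IsExposed 𝕜 A F) (hne : F.Nonempty) :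
    ∃ (l : StrongDual 𝕜 E) (M : 𝕜), (∀ y ∈ A, l y ≤ M) ∧ F = {x ∈ A | l x = M} := by
  obtain ⟨l, rfl⟩ := hF hne
  obtain ⟨x₀, hx₀A, hx₀⟩ := hne
  refine ⟨l, l x₀, hx₀, Set.ext fun x => and_congr_right fun hx => ?_⟩
  exact ⟨fun h => (hx₀ x hx).antisymm (h x₀ hx₀A), fun h y hy => h ▸ hx₀ y hy⟩

end Exposed

section ConvexHull

variable {E : Type*} [AddCommGroup E] [Module ℝ E]

theorem convexHull_inter_setOf_apply_eq {L : Type*} [FunLike L E ℝ] [LinearMapClass L ℝ E ℝ]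
    (l : L) {t : Set E} (ht : t.Finite) {M : ℝ} (hle : ∀ y ∈ t, l y ≤ M) :
    {x ∈ convexHull ℝ t | l x = M} = convexHull ℝ {y ∈ t | l y = M} := by
  classical
  refine subset_antisymm ?_ fun x hx => ⟨convexHull_mono (Set.sep_subset _ _) hx, ?_⟩
  · lift t to Finset E using ht
    rintro _ ⟨hx, hxM⟩
    obtain ⟨w, hw0, hw1, rfl⟩ := Finset.mem_convexHull'.1 hx
    have hlx : l (∑ y ∈ t, w y • y) = ∑ y ∈ t, w y * l y := by
      simp only [map_sum, map_smul, smul_eq_mul]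
    have hslack : ∑ y ∈ t, w y * (M - l y) = 0 := by
      simp only [mul_sub, sum_sub_distrib, ← sum_mul, hw1, one_mul, ← hlx, hxM, sub_self]
    have htight : ∀ y ∈ t, w y ≠ 0 → l y = M := fun y hy hwy => by
      have := (sum_eq_zero_iff_of_nonneg fun y hy => mul_nonneg (hw0 y hy)
        (sub_nonneg.2 (hle y hy))).1 hslack y hy
      linarith [(mul_eq_zero.1 this).resolve_left hwy]
    have hcoe : {y ∈ (t : Set E) | l y = M} = ↑{y ∈ t | l y = M} := by simp
    rw [hcoe]
    refine Finset.mem_convexHull'.2 ⟨w, fun y hy => hw0 y (mem_filter.1 hy).1, ?_, ?_⟩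
    · rwa [sum_filter_of_ne htight]
    · exact sum_filter_of_ne fun y hy h => htight y hy fun h0 => h (by rw [h0, zero_smul])
  · exact convexHull_min (fun y hy => hy.2) (convex_hyperplane ⟨map_add l, map_smul l⟩ M) hx

variable [TopologicalSpace E] {t : Set E}

theorem IsExposed.eq_convexHull_inter (ht : t.Finite) {F : Set E}
    (hF : IsExposed ℝ (convexHull ℝ t) F) : F = convexHull ℝ (F ∩ t) := by
  obtain rfl | hne := F.eq_empty_or_nonempty
  · simp
  obtain ⟨l, M, hle, rfl⟩ := hF.exists_eq_setOf_apply_eq hne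
  have hsep : {y ∈ t | l y = M} = {x ∈ convexHull ℝ t | l x = M} ∩ t := by
    ext y
    exact ⟨fun h => ⟨⟨subset_convexHull ℝ t h.1, h.2⟩, h.1⟩, fun h => ⟨h.2, h.1.2⟩⟩
  rw [← hsep, convexHull_inter_setOf_apply_eq l ht fun y hy => hle y (subset_convexHull ℝ t hy)]

theorem finite_setOf_isExposed_convexHull (ht : t.Finite) :
    {F | IsExposed ℝ (convexHull ℝ t) F}.Finite :=
  (ht.finite_subsets.image (convexHull ℝ)).subset fun F hF =>
    ⟨F ∩ t, Set.inter_subset_right, (hF.eq_convexHull_inter ht).symm⟩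

end ConvexHull

namespace SymEdgePolytope

section Graph

variable {W : Type*}

def weightFunctional [Fintype W] (c : W → ℝ) : StrongDual ℝ (W → ℝ) :=
  ∑ w, c w • ContinuousLinearMap.proj w

theorem weightFunctional_apply [Fintype W] (c x : W → ℝ) :
    weightFunctional c x = ∑ w, c w * x w := by
  simp [weightFunctional]

variable [DecidableEq W]

def edgeVec (i j : W) : W → ℝ :=
  fun k => (if k = i then (1 : ℝ) else 0) - (if k = j then (1 : ℝ) else 0)

theorem edgeVec_swap (i j : W) : edgeVec j i = -edgeVec i j := by
  funext k; simp only [edgeVec, Pi.neg_apply]; ring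

theorem edgeVec_add_edgeVec (i j k : W) : edgeVec i j + edgeVec j k = edgeVec i k := by
  funext l; simp only [edgeVec, Pi.add_apply]; ring

theorem sum_edgeVec [Fintype W] (i j : W) : ∑ k, edgeVec i j k = 0 := by
  simp [edgeVec, sum_sub_distrib]

theorem weightFunctional_edgeVec [Fintype W] (c : W → ℝ) (i j : W) :
    weightFunctional c (edgeVec i j) = c i - c j := by
  simp [weightFunctional_apply, edgeVec, mul_sub, sum_sub_distrib]

variable (H : SimpleGraph W)

def edgeVecs : Set (W → ℝ) := {x | ∃ i j, H.Adj i j ∧ x = edgeVec i j}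

theorem symEdgePolytope_eq_convexHull : symEdgePolytope H = convexHull ℝ (edgeVecs H) := rfl

theorem finite_edgeVecs [Finite W] : (edgeVecs H).Finite :=
  (Set.finite_range fun p : W × W => edgeVec p.1 p.2).subset
    fun _ ⟨i, j, _, hx⟩ => ⟨(i, j), hx.symm⟩

variable {H}

theorem edgeVec_mem_symEdgePolytope {i j : W} (h : H.Adj i j) :
    edgeVec i j ∈ symEdgePolytope H :=
  subset_convexHull ℝ _ ⟨i, j, h, rfl⟩

theorem neg_mem_symEdgePolytope {x : W → ℝ} (hx : x ∈ symEdgePolytope H) :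
    -x ∈ symEdgePolytope H := by
  have hneg : -edgeVecs H = edgeVecs H := by
    ext x
    constructor
    · rintro ⟨i, j, h, hx⟩
      exact ⟨j, i, h.symm, by rw [edgeVec_swap, ← hx, neg_neg]⟩
    · rintro ⟨i, j, h, rfl⟩
      exact ⟨j, i, h.symm, by rw [edgeVec_swap, neg_neg]⟩
  have : -x ∈ -symEdgePolytope H := Set.neg_mem_neg.2 hx
  rwa [symEdgePolytope_eq_convexHull, ← convexHull_neg, hneg] at this

theorem apply_le_of_mem_symEdgePolytope {L : Type*} [FunLike L (W → ℝ) ℝ]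
    [LinearMapClass L ℝ (W → ℝ) ℝ] {l : L} {M : ℝ} (hle : ∀ i j, H.Adj i j → l (edgeVec i j) ≤ M)
    {x : W → ℝ} (hx : x ∈ symEdgePolytope H) : l x ≤ M := by
  refine convexHull_min ?_ (convex_halfSpace_le ⟨map_add l, map_smul l⟩ M) hx
  rintro _ ⟨i, j, h, rfl⟩
  exact hle i j h

theorem sum_eq_zero_of_mem_symEdgePolytope [Fintype W] {x : W → ℝ}
    (hx : x ∈ symEdgePolytope H) : ∑ k, x k = 0 := by
  have hle : ∀ y ∈ symEdgePolytope H, weightFunctional 1 y ≤ 0 := fun y hy =>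
    apply_le_of_mem_symEdgePolytope (fun i j _ => by simp [weightFunctional_edgeVec]) hy
  have h₁ := hle x hx
  have h₂ := hle _ (neg_mem_symEdgePolytope hx)
  simp only [map_neg, weightFunctional_apply, Pi.one_apply, one_mul] at h₁ h₂
  linarith

theorem pos_of_setOf_apply_eq_ne {l : StrongDual ℝ (W → ℝ)} {M : ℝ}
    (hle : ∀ y ∈ symEdgePolytope H, l y ≤ M)
    (hne : {x ∈ symEdgePolytope H | l x = M} ≠ symEdgePolytope H) : 0 < M := by
  obtain ⟨x, hx, hxM⟩ : ∃ x ∈ symEdgePolytope H, l x ≠ M := by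
    by_contra! h
    exact hne (Set.sep_eq_self_iff_mem_true.2 h)
  have := hle _ (neg_mem_symEdgePolytope hx)
  rw [map_neg] at this
  linarith [(hle x hx).lt_of_ne hxM]

theorem finite_setOf_isFacet [Finite W] : {F | IsFacet (symEdgePolytope H) F}.Finite :=
  (finite_setOf_isExposed_convexHull (finite_edgeVecs H)).subset fun _ hF => hF.1

end Graph

section Suspension

variable {V : Type*}

theorem eq_sum_smul_edgeVec_of_sum_eq_zero [Fintype V] [DecidableEq V] {x : Option V → ℝ}
    (hx : ∑ w, x w = 0) : x = ∑ v : V, x (some v) • edgeVec (some v) none := by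
  rw [Fintype.sum_option] at hx
  funext w
  cases w with
  | none => simp [edgeVec]; linarith
  | some u => simp [edgeVec]

variable (G : SimpleGraph V)

/-- The paper's facet normals of `P_Ĝ`, normalised to vanish at the apex: for these, the tight
edges `|c u - c v| = 1` of `Ĝ` span a connected subgraph exactly when every vertex labelled `0`
has a neighbour with nonzero label. -/
structure IsFacetLabel (c : V → ℝ) : Prop where
  eq_one_or_eq_zero_or_eq_neg_one : ∀ v, c v = 1 ∨ c v = 0 ∨ c v = -1
  abs_sub_le_one : ∀ u v, G.Adj u v → |c u - c v| ≤ 1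
  exists_adj_ne_zero : ∀ v, c v = 0 → ∃ u, G.Adj v u ∧ c u ≠ 0

variable {G}

theorem IsFacetLabel.exists_eq_one_or_eq_neg_one [Nonempty V] {c : V → ℝ}
    (hc : IsFacetLabel G c) : ∃ v, c v = 1 ∨ c v = -1 := by
  obtain ⟨v⟩ := ‹Nonempty V›
  rcases hc.eq_one_or_eq_zero_or_eq_neg_one v with h | h | h
  · exact ⟨v, .inl h⟩
  · obtain ⟨u, -, hu⟩ := hc.exists_adj_ne_zero v h
    exact ⟨u, (hc.eq_one_or_eq_zero_or_eq_neg_one u).imp_right (Or.resolve_left · hu)⟩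
  · exact ⟨v, .inr h⟩

@[simp]
theorem suspension_adj_some_some {u v : V} : (suspension G).Adj (some u) (some v) ↔ G.Adj u v :=
  Iff.rfl

theorem suspension_adj_some_none (v : V) : (suspension G).Adj (some v) none := trivial

theorem suspension_adj_none_some (v : V) : (suspension G).Adj none (some v) := trivial

variable (G) [Fintype V] [DecidableEq V]

def labelFunctional (c : V → ℝ) : StrongDual ℝ (Option V → ℝ) :=
  weightFunctional (Option.elim · 0 c)

def labelFace (c : V → ℝ) : Set (Option V → ℝ) :=
  {x ∈ symEdgePolytope (suspension G) | labelFunctional c x = 1}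

variable {G}

theorem labelFunctional_edgeVec_some_none (c : V → ℝ) (v : V) :
    labelFunctional c (edgeVec (some v) none) = c v := by
  simp [labelFunctional, weightFunctional_edgeVec]

theorem labelFunctional_edgeVec_none_some (c : V → ℝ) (v : V) :
    labelFunctional c (edgeVec none (some v)) = -c v := by
  simp [labelFunctional, weightFunctional_edgeVec]

theorem labelFunctional_edgeVec_some_some (c : V → ℝ) (u v : V) :
    labelFunctional c (edgeVec (some u) (some v)) = c u - c v := by
  simp [labelFunctional, weightFunctional_edgeVec]

theorem IsFacetLabel.labelFunctional_le_one {c : V → ℝ} (hc : IsFacetLabel G c) {x : Option V → ℝ}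
    (hx : x ∈ symEdgePolytope (suspension G)) : labelFunctional c x ≤ 1 := by
  refine apply_le_of_mem_symEdgePolytope (fun i j hij => ?_) hx
  have habs : ∀ v, |c v| ≤ 1 := fun v => by
    rcases hc.eq_one_or_eq_zero_or_eq_neg_one v with h | h | h <;> simp [h]
  match i, j, hij with
  | some u, some v, h =>
    rw [labelFunctional_edgeVec_some_some]
    exact (le_abs_self _).trans (hc.abs_sub_le_one u v h)
  | some u, none, _ => rw [labelFunctional_edgeVec_some_none]; exact (le_abs_self _).trans (habs u)
  | none, some v, _ => rw [labelFunctional_edgeVec_none_some]; exact (neg_le_abs _).trans (habs v)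

theorem IsFacetLabel.labelFace_isExposed {c : V → ℝ} (hc : IsFacetLabel G c) :
    IsExposed ℝ (symEdgePolytope (suspension G)) (labelFace G c) :=
  isExposed_setOf_apply_eq fun _ => hc.labelFunctional_le_one

theorem edgeVec_some_none_mem_labelFace_iff {c : V → ℝ} {v : V} :
    edgeVec (some v) none ∈ labelFace G c ↔ c v = 1 := by
  simp [labelFace, edgeVec_mem_symEdgePolytope (suspension_adj_some_none v),
    labelFunctional_edgeVec_some_none]

theorem edgeVec_none_some_mem_labelFace_iff {c : V → ℝ} {v : V} :
    edgeVec none (some v) ∈ labelFace G c ↔ c v = -1 := by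
  simp [labelFace, edgeVec_mem_symEdgePolytope (suspension_adj_none_some v),
    labelFunctional_edgeVec_none_some, neg_eq_iff_eq_neg]

theorem IsFacetLabel.labelFace_nonempty [Nonempty V] {c : V → ℝ} (hc : IsFacetLabel G c) :
    (labelFace G c).Nonempty := by
  obtain ⟨v, h | h⟩ := hc.exists_eq_one_or_eq_neg_one
  · exact ⟨_, edgeVec_some_none_mem_labelFace_iff.2 h⟩
  · exact ⟨_, edgeVec_none_some_mem_labelFace_iff.2 h⟩

theorem IsFacetLabel.labelFace_ne [Nonempty V] {c : V → ℝ} (hc : IsFacetLabel G c) :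
    labelFace G c ≠ symEdgePolytope (suspension G) := by
  intro hP
  obtain ⟨v, h | h⟩ := hc.exists_eq_one_or_eq_neg_one
  · have := edgeVec_none_some_mem_labelFace_iff.1
      (hP ▸ edgeVec_mem_symEdgePolytope (suspension_adj_none_some v))
    linarith
  · have := edgeVec_some_none_mem_labelFace_iff.1
      (hP ▸ edgeVec_mem_symEdgePolytope (suspension_adj_some_none v))
    linarith

theorem IsFacetLabel.apply_edgeVec_some_none {c : V → ℝ} (hc : IsFacetLabel G c)
    {l : StrongDual ℝ (Option V → ℝ)} {M : ℝ} (hl : ∀ x ∈ labelFace G c, l x = M) (v : V) :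
    l (edgeVec (some v) none) = c v * M := by
  have tight : ∀ {i j}, (suspension G).Adj i j → labelFunctional c (edgeVec i j) = 1 →
      l (edgeVec i j) = M := fun h h1 => hl _ ⟨edgeVec_mem_symEdgePolytope h, h1⟩
  have of_eq_one : ∀ {u}, c u = 1 → l (edgeVec (some u) none) = M := fun {u} hu =>
    tight (suspension_adj_some_none u) (by rw [labelFunctional_edgeVec_some_none, hu])
  have of_eq_neg_one : ∀ {u}, c u = -1 → l (edgeVec (some u) none) = -M := fun {u} hu => by
    rw [← tight (suspension_adj_none_some u) (by rw [labelFunctional_edgeVec_none_some, hu,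
      neg_neg]), edgeVec_swap, map_neg]
  have of_adj : ∀ {a b}, G.Adj a b → c a - c b = 1 → l (edgeVec (some a) (some b)) = M :=
    fun hab h => tight hab (by rw [labelFunctional_edgeVec_some_some, h])
  rcases hc.eq_one_or_eq_zero_or_eq_neg_one v with h | h | h
  · rw [h, one_mul, of_eq_one h]
  · obtain ⟨u, huv, hu⟩ := hc.exists_adj_ne_zero v h
    -- `e_v - e_apex = (e_v - e_u) + (e_u - e_apex)`, and both summands are tight up to sign
    rw [h, zero_mul, ← edgeVec_add_edgeVec _ (some u), map_add]
    rcases hc.eq_one_or_eq_zero_or_eq_neg_one u with h' | h' | h'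
    · rw [edgeVec_swap, map_neg, of_adj huv.symm (by rw [h, h', sub_zero]), of_eq_one h',
        neg_add_cancel]
    · exact absurd h' hu
    · rw [of_adj huv (by rw [h, h', sub_neg_eq_add, zero_add]), of_eq_neg_one h', add_neg_cancel]
  · rw [h, of_eq_neg_one h, neg_one_mul]

theorem IsFacetLabel.apply_eq_mul_labelFunctional {c : V → ℝ} (hc : IsFacetLabel G c)
    {l : StrongDual ℝ (Option V → ℝ)} {M : ℝ} (hl : ∀ x ∈ labelFace G c, l x = M)
    {x : Option V → ℝ} (hx : x ∈ symEdgePolytope (suspension G)) :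
    l x = M * labelFunctional c x := by
  rw [eq_sum_smul_edgeVec_of_sum_eq_zero (sum_eq_zero_of_mem_symEdgePolytope hx)]
  simp only [map_sum, map_smul, smul_eq_mul, hc.apply_edgeVec_some_none hl,
    labelFunctional_edgeVec_some_none, mul_sum]
  exact sum_congr rfl fun v _ => by ring

theorem IsFacetLabel.labelFace_isFacet [Nonempty V] {c : V → ℝ} (hc : IsFacetLabel G c) :
    IsFacet (symEdgePolytope (suspension G)) (labelFace G c) := by
  refine ⟨hc.labelFace_isExposed, hc.labelFace_ne, fun F hF hne hsub => ?_⟩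
  obtain ⟨l, M, hle, rfl⟩ := hF.exists_eq_setOf_apply_eq (hc.labelFace_nonempty.mono hsub)
  have hM : M ≠ 0 := (pos_of_setOf_apply_eq_ne hle hne).ne'
  refine hsub.antisymm' fun x ⟨hxP, hx⟩ => ⟨hxP, ?_⟩
  rw [hc.apply_eq_mul_labelFunctional (fun y hy => (hsub hy).2) hxP] at hx
  exact (mul_eq_left₀ hM).1 hx

theorem labelFace_inj {c c' : V → ℝ} (hc : ∀ v, c v = 1 ∨ c v = 0 ∨ c v = -1)
    (hc' : ∀ v, c' v = 1 ∨ c' v = 0 ∨ c' v = -1) (h : labelFace G c = labelFace G c') :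
    c = c' := by
  funext v
  have h1 : c v = 1 ↔ c' v = 1 := by
    rw [← edgeVec_some_none_mem_labelFace_iff, h, edgeVec_some_none_mem_labelFace_iff]
  have h2 : c v = -1 ↔ c' v = -1 := by
    rw [← edgeVec_none_some_mem_labelFace_iff, h, edgeVec_none_some_mem_labelFace_iff]
  rcases hc v with hv | hv | hv <;> rcases hc' v with hv' | hv' | hv' <;> simp_all

end Suspension

section Labels

variable {V : Type*} (G : SimpleGraph V)

open scoped Classical in
noncomputable def subsetLabel (S : Finset V) : V → ℝ :=
  fun v => if v ∈ S then 1 else if ∃ u ∈ S, G.Adj v u then 0 else -1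

def zeroAtLabel [DecidableEq V] (u : V) : V → ℝ :=
  fun w => if w = u then 0 else -1

variable {G}

theorem subsetLabel_of_mem {S : Finset V} {v : V} (hv : v ∈ S) : subsetLabel G S v = 1 := by
  simp [subsetLabel, hv]

theorem subsetLabel_of_adj {S : Finset V} {u v : V} (hv : v ∉ S) (hu : u ∈ S) (h : G.Adj v u) :
    subsetLabel G S v = 0 := by
  simp only [subsetLabel, hv, if_false]
  rw [if_pos ⟨u, hu, h⟩]

theorem subsetLabel_of_forall_not_adj {S : Finset V} {v : V} (hv : v ∉ S)
    (h : ∀ u ∈ S, ¬G.Adj v u) : subsetLabel G S v = -1 := by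
  simp only [subsetLabel, hv, if_false]
  rw [if_neg fun ⟨u, hu, huv⟩ => h u hu huv]

theorem subsetLabel_eq_one_iff {S : Finset V} {v : V} : subsetLabel G S v = 1 ↔ v ∈ S := by
  unfold subsetLabel
  split_ifs <;> norm_num [*]

variable (G)

theorem isFacetLabel_subsetLabel (S : Finset V) : IsFacetLabel G (subsetLabel G S) where
  eq_one_or_eq_zero_or_eq_neg_one v := by unfold subsetLabel; split_ifs <;> norm_num
  abs_sub_le_one u v h := by
    by_cases hu : u ∈ S <;> by_cases hv : v ∈ S
    · simp [subsetLabel_of_mem hu, subsetLabel_of_mem hv]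
    · simp [subsetLabel_of_mem hu, subsetLabel_of_adj hv hu h.symm]
    · simp [subsetLabel_of_adj hu hv h, subsetLabel_of_mem hv]
    · unfold subsetLabel
      split_ifs <;> norm_num
  exists_adj_ne_zero v hv := by
    have hvS : v ∉ S := fun h => by simp [subsetLabel_of_mem h] at hv
    obtain ⟨u, hu, huv⟩ : ∃ u ∈ S, G.Adj v u := by
      by_contra! h
      rw [subsetLabel_of_forall_not_adj hvS h] at hv
      norm_num at hv
    exact ⟨u, huv, by simp [subsetLabel_of_mem hu]⟩

theorem subsetLabel_injective : Function.Injective (subsetLabel G) := fun S T h => by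
  ext v
  rw [← subsetLabel_eq_one_iff (G := G), h, subsetLabel_eq_one_iff]

variable {G}

theorem isFacetLabel_zeroAtLabel [DecidableEq V] {u v : V} (h : G.Adj u v) :
    IsFacetLabel G (zeroAtLabel u) where
  eq_one_or_eq_zero_or_eq_neg_one w := by unfold zeroAtLabel; split_ifs <;> norm_num
  abs_sub_le_one a b _ := by unfold zeroAtLabel; split_ifs <;> norm_num
  exists_adj_ne_zero w hw := by
    obtain rfl : w = u := by
      by_contra hwu
      simp [zeroAtLabel, hwu] at hw
    exact ⟨v, h, by simp [zeroAtLabel, h.ne']⟩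

theorem zeroAtLabel_ne_subsetLabel [DecidableEq V] (u : V) (S : Finset V) :
    zeroAtLabel u ≠ subsetLabel G S := by
  intro h
  -- `zeroAtLabel u` never takes the value `1`, so `S = ∅`
  obtain rfl : S = ∅ := eq_empty_of_forall_notMem fun v hv => by
    have := (subsetLabel_eq_one_iff (G := G)).2 hv
    rw [← h, zeroAtLabel] at this
    split_ifs at this <;> norm_num at this
  have := congrFun h u
  rw [subsetLabel_of_forall_not_adj (notMem_empty u) (by simp)] at this
  simp [zeroAtLabel] at this

end Labels

section Count

variable {V : Type*} [Fintype V] [DecidableEq V]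

theorem labelFace_subsetLabel_injective (G : SimpleGraph V) :
    Function.Injective fun S => labelFace G (subsetLabel G S) := fun S T h =>
  subsetLabel_injective G <|
    labelFace_inj (isFacetLabel_subsetLabel G S).eq_one_or_eq_zero_or_eq_neg_one
      (isFacetLabel_subsetLabel G T).eq_one_or_eq_zero_or_eq_neg_one h

variable [Nonempty V]

theorem nonempty_of_isFacet {G : SimpleGraph V} {F : Set (Option V → ℝ)}
    (hF : IsFacet (symEdgePolytope (suspension G)) F) : F.Nonempty := by
  have hS := isFacetLabel_subsetLabel G ∅
  rw [Set.nonempty_iff_ne_empty]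
  rintro rfl
  exact hS.labelFace_nonempty.ne_empty
    (hF.2.2 _ hS.labelFace_isExposed hS.labelFace_ne (Set.empty_subset _))

theorem exists_eq_labelFace_subsetLabel_of_isFacet_bot {F : Set (Option V → ℝ)}
    (hF : IsFacet (symEdgePolytope (suspension (⊥ : SimpleGraph V))) F) :
    ∃ S, F = labelFace ⊥ (subsetLabel ⊥ S) := by
  classical
  have hFt := hF.1.eq_convexHull_inter (finite_edgeVecs _)
  obtain ⟨l, M, hle, rfl⟩ := hF.1.exists_eq_setOf_apply_eq (nonempty_of_isFacet hF)
  have hM := pos_of_setOf_apply_eq_ne hle hF.2.1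
  set S := univ.filter fun v => l (edgeVec (some v) none) = M
  have hS := isFacetLabel_subsetLabel ⊥ S
  refine ⟨S, (hF.2.2 _ hS.labelFace_isExposed hS.labelFace_ne ?_).symm⟩
  rw [hFt]
  refine convexHull_min ?_ (hS.labelFace_isExposed.convex (convex_convexHull ℝ _))
  rintro _ ⟨⟨-, hxM⟩, i, j, hij, rfl⟩
  match i, j, hij with
  | some a, some b, h => exact absurd h (by simp)
  | some a, none, _ =>
    exact edgeVec_some_none_mem_labelFace_iff.2 (subsetLabel_of_mem (by simpa [S] using hxM))
  | none, some b, _ =>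
    have hb : b ∉ S := fun hb => by
      rw [edgeVec_swap, map_neg, (mem_filter.1 hb).2] at hxM
      linarith
    exact edgeVec_none_some_mem_labelFace_iff.2 (subsetLabel_of_forall_not_adj hb (by simp))

end Count

end SymEdgePolytope

open SymEdgePolytope in
/-- Let `G` be a graph on `[n-1]` with `n ≥ 2`. Then
`N(P_Ĝ) ≥ 2^(n-1)`, with equality if and only if `G` has no edges (so that `Ĝ` is the
star graph `K_{1,n-1}`). -/
theorem numFacets_suspension_lower_bound {V : Type*} [Fintype V] [DecidableEq V]
    [Nonempty V] (G : SimpleGraph V) :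
    2 ^ Fintype.card V ≤ numFacets (symEdgePolytope (suspension G)) ∧
      (numFacets (symEdgePolytope (suspension G)) = 2 ^ Fintype.card V ↔ G = ⊥) := by
  set facets := {F | IsFacet (symEdgePolytope (suspension G)) F}
  set subsetFacets := Set.range fun S : Finset V => labelFace G (subsetLabel G S)
  have hfin : facets.Finite := finite_setOf_isFacet
  have hsub : subsetFacets ⊆ facets := Set.range_subset_iff.2 fun S =>
    (isFacetLabel_subsetLabel G S).labelFace_isFacet
  have hcard : subsetFacets.ncard = 2 ^ Fintype.card V := by
    rw [Set.ncard_range_of_injective (labelFace_subsetLabel_injective G), Nat.card_eq_fintype_card,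
      Fintype.card_finset]
  refine ⟨hcard ▸ Set.ncard_le_ncard hsub hfin, fun h => ?_, ?_⟩
  · by_contra hG
    obtain ⟨u, v, huv⟩ := SimpleGraph.ne_bot_iff_exists_adj.1 hG
    have hu := isFacetLabel_zeroAtLabel huv
    have hlt : subsetFacets ⊂ facets := (Set.ssubset_iff_of_subset hsub).2
      ⟨_, hu.labelFace_isFacet, fun ⟨S, hS⟩ => zeroAtLabel_ne_subsetLabel u S <|
        labelFace_inj hu.eq_one_or_eq_zero_or_eq_neg_one
          (isFacetLabel_subsetLabel G S).eq_one_or_eq_zero_or_eq_neg_one hS.symm⟩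
    have : facets.ncard = 2 ^ Fintype.card V := h
    linarith [Set.ncard_lt_ncard hlt hfin]
  · rintro rfl
    rw [numFacets, ← hcard]
    exact congrArg Set.ncard (hsub.antisymm' fun F hF =>
      (exists_eq_labelFace_subsetLabel_of_isFacet_bot hF).imp fun _ => Eq.symm)
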